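/- Let 0 < λ < 1 and V(X) = λE(X) + E(X₊). Then for every X on a finite probability space, min over y ∈ ℝ of { y + V(X − y) } = λE(X) + (1−λ)·CVaR_λ(X), where CVaR_λ(X) = min over y of { y + (1/(1−λ))E((X−y)₊) }. In particular, the risk generated by the convex combination (1−λ)V₁ + λV₂ of V₁(X)=E(X₊) and V₂(X)=E(X)+E(X₊) is not E(X) (when X is non-constant). -/

import Mathlib

/-!
Writing `E = E(X)` and `S(y) = E((X - y)₊)`, the objective splits as
`y + λ(E - y) + S(y) = λE + (1 - λ)(y + S(y)/(1 - λ))`, whose second factor is the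
Rockafellar–Uryasev function of `CVaR_λ`. It is continuous and coercive, so it attains its
minimum, and it exceeds `E` pointwise when `X` is non-constant: either `S(y) > 0`, and then
`S(y)/(1 - λ) > S(y) ≥ E - y`, or `S(y) = 0`, and then `X ≤ y` with some strict inequality,
so `E < y`. Hence `CVaR_λ(X) > E(X)`.
-/

open Finset Filter Set

lemma sInf_range_eq_of_forall_le {ι : Type*} {f : ι → ℝ} {i : ι} (h : ∀ j, f i ≤ f j) :
    sInf (range f) = f i :=
  IsLeast.csInf_eq ⟨⟨i, rfl⟩, by rintro _ ⟨j, rfl⟩; exact h j⟩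

section FiniteExpectation

variable {Ω : Type*} [Fintype Ω] {p : Ω → ℝ} (X : Ω → ℝ)

/-- The Rockafellar–Uryasev function: for `c = 1/(1 - λ)` its infimum over `y` is `CVaR_λ(X)`. -/
def cvarObjective (p X : Ω → ℝ) (c y : ℝ) : ℝ :=
  y + c * ∑ ω, p ω * max (X ω - y) 0

lemma sum_mul_sub_const (hsum : ∑ ω, p ω = 1) (y : ℝ) :
    ∑ ω, p ω * (X ω - y) = ∑ ω, p ω * X ω - y := by
  simp only [mul_sub, sum_sub_distrib, ← sum_mul, hsum, one_mul]

lemma sum_mul_max_sub_nonneg (hp : ∀ ω, 0 ≤ p ω) (y : ℝ) :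
    0 ≤ ∑ ω, p ω * max (X ω - y) 0 :=
  sum_nonneg fun ω _ => mul_nonneg (hp ω) (le_max_right _ _)

lemma sub_le_sum_mul_max_sub (hp : ∀ ω, 0 ≤ p ω) (hsum : ∑ ω, p ω = 1) (y : ℝ) :
    ∑ ω, p ω * X ω - y ≤ ∑ ω, p ω * max (X ω - y) 0 := by
  rw [← sum_mul_sub_const X hsum y]
  exact sum_le_sum fun ω _ => mul_le_mul_of_nonneg_left (le_max_left _ _) (hp ω)

lemma sum_mul_lt_of_le_of_exists_lt (hp : ∀ ω, 0 < p ω) (hsum : ∑ ω, p ω = 1) {y : ℝ}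
    (hle : ∀ ω, X ω ≤ y) (hlt : ∃ ω, X ω < y) : ∑ ω, p ω * X ω < y :=
  calc ∑ ω, p ω * X ω
      < ∑ ω, p ω * y := by
        obtain ⟨ω, hω⟩ := hlt
        exact sum_lt_sum (fun ω _ => mul_le_mul_of_nonneg_left (hle ω) (hp ω).le)
          ⟨ω, mem_univ ω, mul_lt_mul_of_pos_left hω (hp ω)⟩
    _ = y := by rw [← sum_mul, hsum, one_mul]

lemma le_of_sum_mul_max_sub_eq_zero (hp : ∀ ω, 0 < p ω) {y : ℝ}
    (h : ∑ ω, p ω * max (X ω - y) 0 = 0) (ω : Ω) : X ω ≤ y := by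
  have hterm := (sum_eq_zero_iff_of_nonneg fun ω _ =>
    mul_nonneg (hp ω).le (le_max_right (X ω - y) 0)).1 h ω (mem_univ ω)
  rw [mul_eq_zero, or_iff_right (hp ω).ne', max_eq_right_iff, sub_nonpos] at hterm
  exact hterm

lemma continuous_cvarObjective (p X : Ω → ℝ) (c : ℝ) : Continuous (cvarObjective p X c) := by
  unfold cvarObjective
  fun_prop

lemma tendsto_cvarObjective_cocompact (hp : ∀ ω, 0 ≤ p ω) (hsum : ∑ ω, p ω = 1) {c : ℝ}
    (hc : 1 < c) : Tendsto (cvarObjective p X c) (cocompact ℝ) atTop := by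
  rw [cocompact_eq_atBot_atTop, tendsto_sup]
  constructor
  · refine tendsto_atTop_mono (fun y => ?_)
      (tendsto_atTop_add_const_left _ (c * ∑ ω, p ω * X ω)
        (tendsto_id.const_mul_atBot_of_neg (by linarith : -(c - 1) < 0)))
    have := sub_le_sum_mul_max_sub X hp hsum y
    simp only [cvarObjective, id]
    nlinarith
  · refine tendsto_atTop_mono (fun y => ?_) tendsto_id
    have := sum_mul_max_sub_nonneg X hp y
    simp only [cvarObjective, id]
    nlinarith

lemma exists_forall_cvarObjective_le (hp : ∀ ω, 0 ≤ p ω) (hsum : ∑ ω, p ω = 1) {c : ℝ}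
    (hc : 1 < c) : ∃ y₀, ∀ y, cvarObjective p X c y₀ ≤ cvarObjective p X c y :=
  (continuous_cvarObjective p X c).exists_forall_le (tendsto_cvarObjective_cocompact X hp hsum hc)

lemma sum_mul_lt_cvarObjective (hp : ∀ ω, 0 < p ω) (hsum : ∑ ω, p ω = 1)
    (hX : ¬ ∃ c : ℝ, ∀ ω, X ω = c) {c : ℝ} (hc : 1 < c) (y : ℝ) :
    ∑ ω, p ω * X ω < cvarObjective p X c y := by
  rcases (sum_mul_max_sub_nonneg X (fun ω => (hp ω).le) y).eq_or_lt with hzero | hpos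
  · have hle := le_of_sum_mul_max_sub_eq_zero X hp hzero.symm
    have hlt : ∃ ω, X ω < y := by
      push Not at hX
      obtain ⟨ω, hω⟩ := hX y
      exact ⟨ω, (hle ω).lt_of_ne hω⟩
    simpa [cvarObjective, ← hzero] using sum_mul_lt_of_le_of_exists_lt X hp hsum hle hlt
  · have := sub_le_sum_mul_max_sub X (fun ω => (hp ω).le) hsum y
    unfold cvarObjective
    nlinarith

end FiniteExpectation

/-- For `V(Z) = λ E(Z) + E(Z₊)` with `0 < λ < 1`,
`min_y { y + V(X - y) } = λ E(X) + (1-λ) CVaR_λ(X)`; in particular this is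
not `E(X)` when `X` is non-constant. -/
theorem stmt14 {Ω : Type} [Fintype Ω] (p : Ω → ℝ) (hp : ∀ ω, 0 < p ω)
    (hsum : ∑ ω, p ω = 1) (lam : ℝ) (hlam0 : 0 < lam) (hlam1 : lam < 1)
    (X : Ω → ℝ) :
    sInf (Set.range fun y : ℝ =>
        y + (lam * (∑ ω, p ω * (X ω - y)) + ∑ ω, p ω * max (X ω - y) 0)) =
      lam * (∑ ω, p ω * X ω) +
        (1 - lam) *
          sInf (Set.range fun y : ℝ =>
            y + (1 / (1 - lam)) * ∑ ω, p ω * max (X ω - y) 0) ∧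
    ((¬ ∃ c : ℝ, ∀ ω, X ω = c) →
      sInf (Set.range fun y : ℝ =>
          y + (lam * (∑ ω, p ω * (X ω - y)) + ∑ ω, p ω * max (X ω - y) 0)) ≠
        ∑ ω, p ω * X ω) := by
  have hpos : 0 < 1 - lam := by linarith
  have hc : 1 < 1 / (1 - lam) := by rw [lt_div_iff₀ hpos]; linarith
  set E := ∑ ω, p ω * X ω
  set g := cvarObjective p X (1 / (1 - lam))
  have hsplit : ∀ y, y + (lam * (∑ ω, p ω * (X ω - y)) + ∑ ω, p ω * max (X ω - y) 0) =
      lam * E + (1 - lam) * g y := by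
    intro y
    rw [sum_mul_sub_const X hsum]
    simp only [g, cvarObjective]
    field_simp
    ring
  obtain ⟨y₀, hy₀⟩ := exists_forall_cvarObjective_le X (fun ω => (hp ω).le) hsum hc
  have hinf : sInf (range fun y => y + (lam * (∑ ω, p ω * (X ω - y)) +
      ∑ ω, p ω * max (X ω - y) 0)) = lam * E + (1 - lam) * g y₀ := by
    simp_rw [hsplit]
    exact sInf_range_eq_of_forall_le fun y => by gcongr; exact hy₀ y
  refine ⟨?_, fun hX => ?_⟩
  · change _ = lam * E + (1 - lam) * sInf (range g)
    rw [hinf, sInf_range_eq_of_forall_le hy₀]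
  have := sum_mul_lt_cvarObjective X hp hsum hX hc y₀
  rw [hinf]
  nlinarith
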